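/- arXiv:1608.04419 — 4 statements merged into one kernel-verified Lean document; each statement's English description precedes it below -/
import Mathlib

section
/- Let K = Q(√a₁, ..., √aₙ) be a totally real n-quadratic field of degree 2ⁿ over Q with all aᵢ positive squarefree integers. Then at least n distinct rational primes ramify in K. -/
/-
If fewer than `n` primes divide the `aᵢ`, the exponent vectors mod 2 of the `aᵢ` are linearly
dependent over `𝔽₂`, so some nonempty subproduct `∏_{i ∈ S} aᵢ` is a perfect square. Then
`∏_{i ∈ S} √aᵢ` is rational, so one `√aᵢ` lies in the algebra generated by the others and `K` is
spanned by `2ⁿ⁻¹` products of square roots, contradicting `[K : ℚ] = 2ⁿ`. On the other hand every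
prime `p ∣ aᵢ` divides the discriminant: since `p² ∤ aᵢ`, `√aᵢ` is a nonzero nilpotent of
`𝓞_K / p`, which makes the trace form degenerate mod `p`.
-/

section TraceForm

variable {A : Type*} [CommRing A] [Module.Free ℤ A] [Module.Finite ℤ A]

theorem Algebra.dvd_trace_of_sq_eq_smul (p : ℕ) [Fact p.Prime] {z w : A}
    (h : z ^ 2 = (p : ℤ) • w) : (p : ℤ) ∣ Algebra.trace ℤ A z := by
  classical
  let b := Module.Free.chooseBasis ℤ A
  let f := Int.castRingHom (ZMod p)
  have hnil : IsNilpotent ((Algebra.leftMulMatrix b z).map f) := by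
    refine ⟨2, ?_⟩
    rw [← Matrix.map_pow, ← map_pow, h, map_zsmul]
    ext i j
    simp only [Matrix.map_apply, Matrix.smul_apply, smul_eq_mul, map_mul, map_natCast,
      ZMod.natCast_self, zero_mul, Matrix.zero_apply]
  rw [← ZMod.intCast_zmod_eq_zero_iff_dvd, Algebra.trace_eq_matrix_trace b]
  exact (AddMonoidHom.map_trace f _).trans (Matrix.isNilpotent_trace_of_isNilpotent hnil).eq_zero

theorem intCast_dvd_intCast_iff_of_free [Nontrivial A] {m d : ℤ} :
    (m : A) ∣ (d : A) ↔ m ∣ d := by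
  refine ⟨fun ⟨y, hy⟩ => ?_, Int.cast_dvd_cast m d⟩
  rw [← Int.pow_dvd_pow_iff (Module.finrank_pos (R := ℤ) (M := A)).ne',
    ← Algebra.norm_algebraMap (S := A), ← Algebra.norm_algebraMap (S := A), algebraMap_int_eq,
    eq_intCast, eq_intCast, hy, map_mul]
  exact dvd_mul_right _ _

/- The coordinate vector of `x` is a nonzero kernel vector of the trace form mod `p`:
it is nonzero because `x ∉ pA` (else `p² ∣ d`), and `Tr (x * y) ≡ 0` because `(x * y) ^ 2 ∈ pA`. -/
theorem Algebra.dvd_discr_of_sq_eq_intCast [Nontrivial A] (p : ℕ) [Fact p.Prime] {ι : Type*}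
    [Fintype ι] [DecidableEq ι] (b : Module.Basis ι ℤ A) {x : A} {d : ℤ} (hx : x ^ 2 = d)
    (hpd : (p : ℤ) ∣ d) (hpd2 : ¬ (p : ℤ) ^ 2 ∣ d) : (p : ℤ) ∣ Algebra.discr ℤ b := by
  let f := Int.castRingHom (ZMod p)
  rw [Algebra.discr_def, ← ZMod.intCast_zmod_eq_zero_iff_dvd]
  change f _ = 0
  rw [RingHom.map_det, ← Matrix.exists_mulVec_eq_zero_iff]
  refine ⟨f ∘ b.equivFun x, fun h0 => hpd2 ?_, ?_⟩
  · have hdvd (i : ι) : (p : ℤ) ∣ b.repr x i :=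
      (ZMod.intCast_zmod_eq_zero_iff_dvd _ p).mp (congrFun h0 i)
    have hxy : x = (p : ℤ) • ∑ i, (b.repr x i / p) • b i := by
      rw [Finset.smul_sum]
      conv_lhs => rw [← b.sum_repr x]
      simp only [smul_smul, Int.mul_ediv_cancel' (hdvd _)]
    rw [← intCast_dvd_intCast_iff_of_free (A := A), ← hx, hxy, zsmul_eq_mul, mul_pow, Int.cast_pow,
      Int.cast_natCast]
    exact dvd_mul_right _ _
  · ext i
    obtain ⟨e, rfl⟩ := hpd
    rw [RingHom.mapMatrix_apply, ← RingHom.map_mulVec, Algebra.traceMatrix_of_basis_mulVec]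
    refine (ZMod.intCast_zmod_eq_zero_iff_dvd _ p).mpr
      (Algebra.dvd_trace_of_sq_eq_smul p (w := e * b i ^ 2) ?_)
    rw [mul_pow, hx, zsmul_eq_mul]
    push_cast
    ring

end TraceForm

namespace NumberField

variable {K : Type*} [Field K] [NumberField K]

theorem dvd_discr_of_sq_eq_of_squarefree {x : K} {d : ℤ} (hx : x ^ 2 = d) (hd : Squarefree d)
    {p : ℕ} (hp : p.Prime) (hpd : (p : ℤ) ∣ d) : (p : ℤ) ∣ discr K := by
  have : Fact p.Prime := ⟨hp⟩
  let y : 𝓞 K := ⟨x, .of_pow two_pos (hx ▸ isIntegral_algebraMap)⟩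
  have hy : y ^ 2 = d := RingOfIntegers.coe_injective (by rw [map_pow, map_intCast]; exact hx)
  rw [← discr_eq_discr K (RingOfIntegers.basis K)]
  exact Algebra.dvd_discr_of_sq_eq_intCast p _ hy hpd fun h =>
    (Nat.prime_iff_prime_int.mp hp).not_isUnit (hd _ (sq (p : ℤ) ▸ h))

variable (K) in
theorem finite_setOf_prime_dvd_discr : {p : ℕ | p.Prime ∧ (p : ℤ) ∣ discr K}.Finite :=
  (discr K).natAbs.primeFactors.finite_toSet.subset fun _ ⟨hp, hdvd⟩ =>
    Nat.mem_primeFactors.mpr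
      ⟨hp, Int.ofNat_dvd_left.mp hdvd, Int.natAbs_ne_zero.mpr (discr_ne_zero K)⟩

end NumberField

theorem Nat.isSquare_of_forall_even_factorization {m : ℕ} (hm : m ≠ 0)
    (h : ∀ p, Even (m.factorization p)) : IsSquare m := by
  refine ⟨m.factorization.prod fun p k => p ^ (k / 2), ?_⟩
  conv_lhs => rw [← Nat.prod_factorization_pow_eq_self hm]
  rw [Finsupp.prod, Finsupp.prod, ← Finset.prod_mul_distrib]
  refine Finset.prod_congr rfl fun p _ => ?_
  rw [← pow_add, ← two_mul, Nat.mul_div_cancel' (h p).two_dvd]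

theorem exists_nonempty_isSquare_prod_of_card_lt {ι : Type*} [Fintype ι] (b : ι → ℕ)
    (hb : ∀ i, b i ≠ 0) (P : Finset ℕ) (hP : ∀ i, (b i).primeFactors ⊆ P)
    (hcard : P.card < Fintype.card ι) : ∃ S : Finset ι, S.Nonempty ∧ IsSquare (∏ i ∈ S, b i) := by
  classical
  let v (i : ι) (p : P) : ZMod 2 := (b i).factorization p
  have hv : ¬ LinearIndependent (ZMod 2) v := fun hli => by
    have := hli.fintype_card_le_finrank
    simp only [Module.finrank_fintype_fun_eq_card, Fintype.card_coe] at this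
    omega
  obtain ⟨g, hg, i, hi⟩ := Fintype.not_linearIndependent_iff.mp hv
  refine ⟨Finset.univ.filter (g · ≠ 0), ⟨i, by simpa using hi⟩,
    Nat.isSquare_of_forall_even_factorization (Finset.prod_ne_zero_iff.mpr fun j _ => hb j)
    fun p => ?_⟩
  rw [Nat.factorization_prod fun j _ => hb j, Finset.sum_apply', ← ZMod.natCast_eq_zero_iff_even,
    Nat.cast_sum]
  by_cases hp : p ∈ P
  · have hzero : ∑ j, g j * (b j).factorization p = 0 := by
      simpa [v, Finset.sum_apply] using congrFun hg ⟨p, hp⟩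
    rw [Finset.sum_filter]
    refine (Finset.sum_congr rfl fun j _ => ?_).trans hzero
    rcases (by decide : ∀ z : ZMod 2, z = 0 ∨ z = 1) (g j) with h | h <;> simp [h]
  · refine Finset.sum_eq_zero fun j _ => ?_
    rw [Finsupp.notMem_support_iff.mp fun h => hp (hP j (Nat.support_factorization _ ▸ h)),
      Nat.cast_zero]


open scoped symmDiff

section MultiQuadratic

variable {F L ι : Type*} [Field F] [DecidableEq ι]

theorem Finset.prod_mul_prod_eq_smul_prod_symmDiff [CommRing L] [Algebra F L] {α : ι → L}
    {c : ι → F} (T T' : Finset ι) (hα : ∀ i ∈ T ∩ T', α i ^ 2 = algebraMap F L (c i)) :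
    (∏ i ∈ T, α i) * ∏ i ∈ T', α i = (∏ i ∈ T ∩ T', c i) • ∏ i ∈ T ∆ T', α i := by
  have hunion : T ∪ T' = T ∆ T' ∪ T ∩ T' := by
    rw [← Finset.sup_eq_union, ← symmDiff_sup_inf, Finset.sup_eq_union, Finset.inf_eq_inter]
  have hdisj : Disjoint (T ∆ T') (T ∩ T') := disjoint_symmDiff_inf T T'
  rw [← Finset.prod_union_inter, hunion, Finset.prod_union hdisj, mul_assoc,
    ← Finset.prod_mul_distrib, Finset.prod_congr rfl fun i hi => (sq (α i)).symm.trans (hα i hi),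
    ← map_prod, Algebra.smul_def, mul_comm]

theorem finrank_le_two_pow_card_of_adjoin_eq_top [CommRing L] [Algebra F L] {α : ι → L}
    {c : ι → F} (s : Finset ι) (hα : ∀ i ∈ s, α i ^ 2 = algebraMap F L (c i))
    (hgen : Algebra.adjoin F (α '' s) = ⊤) : Module.finrank F L ≤ 2 ^ s.card := by
  classical
  let G : Finset L := s.powerset.image fun T => ∏ i ∈ T, α i
  let W := Submodule.span F (G : Set L)
  have hG {T : Finset ι} (hT : T ⊆ s) : ∏ i ∈ T, α i ∈ W :=
    Submodule.subset_span (by simpa [G] using ⟨T, hT, rfl⟩)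
  have hmul : W * W ≤ W := by
    rw [Submodule.span_mul_span, Submodule.span_le]
    rintro _ ⟨_, h, _, h', rfl⟩
    obtain ⟨T, hT, rfl⟩ := Finset.mem_image.mp (Finset.mem_coe.mp h)
    obtain ⟨T', hT', rfl⟩ := Finset.mem_image.mp (Finset.mem_coe.mp h')
    rw [Finset.mem_powerset] at hT hT'
    change (∏ i ∈ T, α i) * ∏ i ∈ T', α i ∈ W
    rw [Finset.prod_mul_prod_eq_smul_prod_symmDiff T T' fun i hi =>
      hα i (hT (Finset.mem_inter.mp hi).1)]
    exact W.smul_mem _ (hG (symmDiff_le_sup.trans (Finset.union_subset hT hT')))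
  have hW : W = ⊤ := by
    let A := W.toSubalgebra (by simpa using hG (Finset.empty_subset s))
      fun _ _ hx hy => hmul (Submodule.mul_mem_mul hx hy)
    have hA : Algebra.adjoin F (α '' s) ≤ A := Algebra.adjoin_le <| by
      rintro _ ⟨i, hi, rfl⟩
      exact Finset.prod_singleton α i ▸ hG (Finset.singleton_subset_iff.mpr hi)
    rw [hgen, top_le_iff] at hA
    exact congrArg Subalgebra.toSubmodule hA
  calc Module.finrank F L = (G : Set L).finrank F := by rw [Set.finrank, ← finrank_top, ← hW]
    _ ≤ G.card := finrank_span_finset_le_card G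
    _ ≤ s.powerset.card := Finset.card_image_le (s := s.powerset)
    _ = 2 ^ s.card := Finset.card_powerset s

theorem mem_adjoin_erase_of_isSquare_prod [Field L] [Algebra F L] {α : ι → L} {c : ι → F}
    {S : Finset ι} (hα : ∀ j ∈ S, α j ^ 2 = algebraMap F L (c j)) (hc : ∀ j ∈ S, c j ≠ 0)
    (hsq : IsSquare (∏ j ∈ S, c j)) {i : ι} (hi : i ∈ S) :
    α i ∈ Algebra.adjoin F (α '' (S.erase i)) := by
  obtain ⟨r, hr⟩ := hsq
  set u := ∏ j ∈ S.erase i, α j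
  set d := ∏ j ∈ S.erase i, c j
  have hsq_prod {T : Finset ι} (hT : T ⊆ S) :
      (∏ j ∈ T, α j) ^ 2 = algebraMap F L (∏ j ∈ T, c j) := by
    rw [← Finset.prod_pow, map_prod]
    exact Finset.prod_congr rfl fun j hj => hα j (hT hj)
  have hu : u ∈ Algebra.adjoin F (α '' (S.erase i)) :=
    Subalgebra.prod_mem _ fun j hj => Algebra.subset_adjoin (Set.mem_image_of_mem α hj)
  have hu2 : u * u = algebraMap F L d := by rw [← sq]; exact hsq_prod (Finset.erase_subset i S)
  have hd : d ≠ 0 := Finset.prod_ne_zero_iff.mpr fun j hj => hc j (Finset.mem_of_mem_erase hj)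
  have hαu : α i * u ∈ Algebra.adjoin F (α '' (S.erase i)) := by
    have h : (α i * u) ^ 2 = algebraMap F L r ^ 2 := by
      rw [Finset.mul_prod_erase S α hi, hsq_prod subset_rfl, hr, map_mul, sq]
    rcases sq_eq_sq_iff_eq_or_eq_neg.mp h with h | h <;> rw [h]
    · exact Subalgebra.algebraMap_mem _ r
    · exact neg_mem (Subalgebra.algebraMap_mem _ r)
  have hαi : α i = α i * u * u * algebraMap F L d⁻¹ := by
    rw [mul_assoc (α i), hu2, mul_assoc, ← map_mul, mul_inv_cancel₀ hd, map_one, mul_one]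
  rw [hαi]
  exact mul_mem (mul_mem hαu hu) (Subalgebra.algebraMap_mem _ _)

theorem finrank_lt_two_pow_of_isSquare_prod [Field L] [Algebra F L] [Fintype ι] {α : ι → L}
    {c : ι → F} (hα : ∀ i, α i ^ 2 = algebraMap F L (c i)) (hc : ∀ i, c i ≠ 0)
    (hgen : Algebra.adjoin F (Set.range α) = ⊤) {S : Finset ι} (hS : S.Nonempty)
    (hsq : IsSquare (∏ i ∈ S, c i)) : Module.finrank F L < 2 ^ Fintype.card ι := by
  obtain ⟨i, hi⟩ := hS
  have hgen' : Algebra.adjoin F (α '' (Finset.univ.erase i)) = ⊤ := by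
    refine eq_top_iff.mpr (hgen ▸ Algebra.adjoin_le ?_)
    rintro _ ⟨j, rfl⟩
    obtain rfl | hj := eq_or_ne j i
    · refine Algebra.adjoin_mono (Set.image_mono ?_)
        (mem_adjoin_erase_of_isSquare_prod (fun j _ => hα j) (fun j _ => hc j) hsq hi)
      exact Finset.coe_subset.mpr (Finset.erase_subset_erase j (Finset.subset_univ S))
    · exact Algebra.subset_adjoin ⟨j, by simpa using hj, rfl⟩
  calc Module.finrank F L ≤ 2 ^ (Finset.univ.erase i).card :=
        finrank_le_two_pow_card_of_adjoin_eq_top _ (fun j _ => hα j) hgen'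
    _ < 2 ^ Fintype.card ι := by
      rw [Finset.card_erase_of_mem (Finset.mem_univ i), Finset.card_univ]
      exact Nat.pow_lt_pow_right one_lt_two (Nat.sub_lt (Fintype.card_pos_iff.mpr ⟨i⟩) one_pos)

end MultiQuadratic

/-- If `K = ℚ(√a₁, ..., √aₙ)` is a totally real `n`-quadratic field of degree `2ⁿ` over `ℚ`
with all `aᵢ` positive squarefree integers, then at least `n` distinct rational primes
ramify in `K` (i.e. divide its discriminant). -/
theorem stmt_8 (n : ℕ) (a : Fin n → ℤ) (hpos : ∀ i, 0 < a i) (hsf : ∀ i, Squarefree (a i))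
    (K : Type*) [Field K] [NumberField K] (α : Fin n → K) (hα : ∀ i, (α i) ^ 2 = (a i : K))
    (hgen : ∀ x : K, x ∈ Algebra.adjoin ℚ (Set.range α))
    (hdeg : Module.finrank ℚ K = 2 ^ n) :
    n ≤ {p : ℕ | p.Prime ∧ (p : ℤ) ∣ NumberField.discr K}.ncard := by
  classical
  let P : Finset ℕ := Finset.univ.biUnion fun i => (a i).natAbs.primeFactors
  have hP : ↑P ⊆ {p : ℕ | p.Prime ∧ (p : ℤ) ∣ NumberField.discr K} := by
    intro p hp
    obtain ⟨i, -, hpi⟩ := Finset.mem_biUnion.mp hp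
    have hp : p.Prime := Nat.prime_of_mem_primeFactors hpi
    exact ⟨hp, NumberField.dvd_discr_of_sq_eq_of_squarefree (hα i) (hsf i) hp
      (Int.ofNat_dvd_left.mpr (Nat.dvd_of_mem_primeFactors hpi))⟩
  refine le_trans ?_ ((Set.ncard_coe_finset P).symm.le.trans
    (Set.ncard_le_ncard hP (NumberField.finite_setOf_prime_dvd_discr K)))
  by_contra! hlt
  obtain ⟨S, hS, hsq⟩ := exists_nonempty_isSquare_prod_of_card_lt (fun i => (a i).natAbs)
    (fun i => Int.natAbs_ne_zero.mpr (hpos i).ne') P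
    (fun i => Finset.subset_biUnion_of_mem (fun i => (a i).natAbs.primeFactors) (Finset.mem_univ i))
    (by simpa using hlt)
  have hsq' : IsSquare (∏ i ∈ S, (a i : ℚ)) := by
    have hcast : ∏ i ∈ S, (a i : ℚ) = Nat.castRingHom ℚ (∏ i ∈ S, (a i).natAbs) := by
      simp [Nat.cast_natAbs, abs_of_pos (hpos _)]
    exact hcast ▸ hsq.map _
  have hlt' := finrank_lt_two_pow_of_isSquare_prod (c := fun i => (a i : ℚ))
    (fun i => by rw [hα i, map_intCast]) (fun i => Int.cast_ne_zero.mpr (hpos i).ne')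
    (Algebra.eq_top_iff.mpr hgen) hS hsq'
  rw [hdeg, Fintype.card_fin] at hlt'
  exact lt_irrefl _ hlt'
end

section
/- Let K be an imaginary n-quadratic field of degree 2ⁿ over Q. Then at least n - 1 distinct rational primes ramify in K. -/
/-! The monomials `∏ i, α i ^ vᵢ` with `v ∈ (ℤ/2)ⁿ` span `K`, and there are `2ⁿ = [K : ℚ]` of
them, so they form a `ℚ`-basis. Rescaled to square roots of squarefree integers `sᵥ`, they therefore
give `2ⁿ` distinct values `sᵥ`. If a prime `p` divides `sᵥ`, then `√sᵥ` is an integer of `K` whose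
square is divisible by `p` but which is not itself divisible by `p`; its coordinates modulo `p` lie
in the kernel of the trace form modulo `p`, so `p ∣ disc K`. Hence the `sᵥ` are signed products of
ramified primes, and `2ⁿ ≤ 2 · 2ʳ` where `r` is the number of ramified primes. -/

open NumberField Module Submodule

theorem LinearIndependent.eq_of_smul_eq_smul {R M ι : Type*} [Ring R] [AddCommGroup M]
    [Module R M] {v : ι → M} (hv : LinearIndependent R v) {i j : ι} {c d : R} (hc : c ≠ 0)
    (h : c • v i = d • v j) : i = j := by
  by_contra hij
  refine hc (hv.eq_zero_of_smul_mem_span i c ?_)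
  rw [h]
  exact smul_mem _ _ (subset_span ⟨j, by simpa [eq_comm] using hij, rfl⟩)

theorem LinearIndependent.eq_of_sq_smul_eq_sq_smul {F K ι : Type*} [Field F] [Field K]
    [Algebra F K] {v : ι → K} (hv : LinearIndependent F v) {i j : ι} {c d : F} (hc : c ≠ 0)
    (h : (c • v i) ^ 2 = (d • v j) ^ 2) : i = j := by
  rcases sq_eq_sq_iff_eq_or_eq_neg.mp h with h | h
  · exact hv.eq_of_smul_eq_smul hc h
  · exact hv.eq_of_smul_eq_smul hc (h.trans (neg_smul d (v j)).symm)

theorem ZMod.val_add_val_two (u v : ZMod 2) :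
    u.val + v.val = 2 * (u.val * v.val) + (u + v).val := by
  decide +revert

section SquarefreeMonomial

variable {ι F K : Type*} [Fintype ι]

def squarefreeMonomial [CommMonoid K] (α : ι → K) (v : ι → ZMod 2) : K :=
  ∏ i, α i ^ (v i).val

theorem squarefreeMonomial_zero [CommMonoid K] (α : ι → K) : squarefreeMonomial α 0 = 1 := by
  simp [squarefreeMonomial]

theorem squarefreeMonomial_single [CommMonoid K] [DecidableEq ι] (α : ι → K) (i : ι) :
    squarefreeMonomial α (Pi.single i 1) = α i := by
  rw [squarefreeMonomial, Finset.prod_eq_single i (fun j _ hj => by simp [hj]) (by simp),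
    Pi.single_eq_same]
  exact pow_one _

variable [Field F] [CommRing K] [Algebra F K] {α : ι → K} {a : ι → F}

theorem squarefreeMonomial_sq (hα : ∀ i, α i ^ 2 = algebraMap F K (a i)) (v : ι → ZMod 2) :
    squarefreeMonomial α v ^ 2 = algebraMap F K (∏ i, a i ^ (v i).val) := by
  simp only [squarefreeMonomial, map_prod, map_pow, ← hα, ← Finset.prod_pow, pow_right_comm]

theorem squarefreeMonomial_mul (hα : ∀ i, α i ^ 2 = algebraMap F K (a i)) (v w : ι → ZMod 2) :
    squarefreeMonomial α v * squarefreeMonomial α w =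
      algebraMap F K (∏ i, a i ^ ((v i).val * (w i).val)) * squarefreeMonomial α (v + w) := by
  simp only [squarefreeMonomial, map_prod, map_pow, ← hα, ← Finset.prod_mul_distrib]
  refine Finset.prod_congr rfl fun i _ => ?_
  rw [← pow_add, ZMod.val_add_val_two, pow_add, pow_mul, Pi.add_apply]

theorem span_range_squarefreeMonomial (hα : ∀ i, α i ^ 2 = algebraMap F K (a i))
    (hgen : Algebra.adjoin F (Set.range α) = ⊤) :
    span F (Set.range (squarefreeMonomial α)) = ⊤ := by
  classical
  set W := span F (Set.range (squarefreeMonomial α))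
  have hone : 1 ∈ W := subset_span ⟨0, squarefreeMonomial_zero α⟩
  have hmul : ∀ x y, x ∈ W → y ∈ W → x * y ∈ W := by
    have hWW : W * W ≤ W := by
      rw [span_mul_span, span_le]
      rintro _ ⟨_, ⟨v, rfl⟩, _, ⟨w, rfl⟩, rfl⟩
      change squarefreeMonomial α v * squarefreeMonomial α w ∈ W
      rw [squarefreeMonomial_mul hα, ← Algebra.smul_def]
      exact smul_mem _ _ (subset_span ⟨v + w, rfl⟩)
    exact fun x y hx hy => hWW (mul_mem_mul hx hy)
  have hle : Algebra.adjoin F (Set.range α) ≤ W.toSubalgebra hone hmul :=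
    Algebra.adjoin_le (Set.range_subset_iff.2 fun i =>
      subset_span ⟨Pi.single i 1, squarefreeMonomial_single α i⟩)
  rw [hgen] at hle
  exact eq_top_iff.2 fun x _ => hle (Algebra.mem_top (x := x))

theorem linearIndependent_squarefreeMonomial (hα : ∀ i, α i ^ 2 = algebraMap F K (a i))
    (hgen : Algebra.adjoin F (Set.range α) = ⊤) (hdeg : finrank F K = 2 ^ Fintype.card ι) :
    LinearIndependent F (squarefreeMonomial α) := by
  classical
  exact linearIndependent_of_top_le_span_of_card_eq_finrank
    (span_range_squarefreeMonomial hα hgen).ge (by simp [hdeg])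

end SquarefreeMonomial

theorem Int.exists_squarefree_mul_sq {N : ℤ} (hN : N ≠ 0) :
    ∃ s t : ℤ, Squarefree s ∧ t ≠ 0 ∧ N = s * t ^ 2 := by
  obtain ⟨a, b, hab, ha⟩ := Nat.sq_mul_squarefree N.natAbs
  refine ⟨N.sign * a, b, Int.squarefree_natAbs.mp ?_, ?_, ?_⟩
  · simpa [Int.natAbs_mul, Int.natAbs_sign_of_ne_zero hN] using ha
  · intro hb
    simp [Int.natCast_eq_zero.mp hb, eq_comm, hN] at hab
  · conv_lhs => rw [← Int.sign_mul_natAbs N, ← hab]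
    push_cast
    ring

theorem exists_smul_sq_eq_squarefree {K : Type*} [Field K] [CharZero K] {x : K} (hx0 : x ≠ 0)
    {N : ℤ} (hx : x ^ 2 = N) : ∃ s : ℤ, Squarefree s ∧ ∃ q : ℚ, q ≠ 0 ∧ (q • x) ^ 2 = s := by
  have hN : N ≠ 0 := by
    rintro rfl
    exact hx0 (pow_eq_zero_iff two_ne_zero |>.mp (by simpa using hx))
  obtain ⟨s, t, hs, ht, rfl⟩ := Int.exists_squarefree_mul_sq hN
  refine ⟨s, hs, (t : ℚ)⁻¹, by simpa using ht, ?_⟩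
  rw [smul_pow, hx, Rat.smul_def]
  push_cast
  field_simp

section Discriminant

variable {S : Type*} [CommRing S] {p : ℕ} [Fact p.Prime]

theorem natCast_dvd_trace_of_dvd_pow [Module.Free ℤ S] [Module.Finite ℤ S] {x : S} {m : ℕ}
    (hx : (p : S) ∣ x ^ m) : (p : ℤ) ∣ Algebra.trace ℤ S x := by
  classical
  obtain ⟨z, hz⟩ := hx
  let b := Module.Free.chooseBasis ℤ S
  let toZMod := Int.castRingHom (ZMod p)
  -- modulo `p` the multiplication matrix of `x` is nilpotent, so its trace vanishes
  have hnil : IsNilpotent (toZMod.mapMatrix (Algebra.leftMulMatrix b x)) := by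
    refine ⟨m, ?_⟩
    rw [← map_pow, ← map_pow, hz, ← Int.cast_natCast, ← zsmul_eq_mul, map_zsmul]
    ext i j
    rw [RingHom.mapMatrix_apply, Matrix.map_apply, Matrix.smul_apply, smul_eq_mul, map_mul]
    simp [toZMod]
  rw [← ZMod.intCast_zmod_eq_zero_iff_dvd, Algebra.trace_eq_matrix_trace b,
    ← eq_intCast toZMod, AddMonoidHom.map_trace]
  exact (Matrix.isNilpotent_trace_of_isNilpotent hnil).eq_zero

theorem natCast_dvd_discr_of_dvd_pow {ι : Type*} [Fintype ι] [DecidableEq ι]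
    (b : Module.Basis ι ℤ S) {x : S} {m : ℕ} (hxm : (p : S) ∣ x ^ m) (hx : ¬ (p : S) ∣ x) :
    (p : ℤ) ∣ Algebra.discr ℤ b := by
  have := Module.Free.of_basis b
  have := Module.Finite.of_basis b
  let toZMod := Int.castRingHom (ZMod p)
  rw [Algebra.discr_def, ← ZMod.intCast_zmod_eq_zero_iff_dvd, ← eq_intCast toZMod,
    RingHom.map_det, ← Matrix.exists_mulVec_eq_zero_iff]
  refine ⟨toZMod ∘ b.equivFun x, fun h0 => hx ?_, funext fun j => ?_⟩
  · have hdvd : ∀ i, (p : ℤ) ∣ b.repr x i := fun i => by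
      simpa [toZMod, ZMod.intCast_zmod_eq_zero_iff_dvd] using congrFun h0 i
    rw [← b.sum_repr x]
    refine Finset.dvd_sum fun i _ => ?_
    rw [zsmul_eq_mul]
    exact dvd_mul_of_dvd_left (by exact_mod_cast Int.cast_dvd_cast _ _ (hdvd i)) _
  · have hj : (p : S) ∣ (x * b j) ^ m := (mul_pow x (b j) m).symm ▸ dvd_mul_of_dvd_left hxm _
    have := RingHom.map_mulVec toZMod (Algebra.traceMatrix ℤ b) (b.equivFun x) j
    rw [Algebra.traceMatrix_of_basis_mulVec] at this
    rw [RingHom.mapMatrix_apply, ← this]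
    simpa [toZMod, ZMod.intCast_zmod_eq_zero_iff_dvd] using natCast_dvd_trace_of_dvd_pow hj

end Discriminant

theorem Int.dvd_of_cast_dvd_cast {S : Type*} [CommRing S] [Nontrivial S] [Module.Free ℤ S]
    [Module.Finite ℤ S] {a b : ℤ} (h : (a : S) ∣ (b : S)) : a ∣ b := by
  have hd : Module.finrank ℤ S ≠ 0 := Module.finrank_pos.ne'
  rw [← Int.pow_dvd_pow_iff hd, ← Algebra.norm_algebraMap (S := S),
    ← Algebra.norm_algebraMap (S := S)]
  simpa using map_dvd (Algebra.norm ℤ) h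

namespace NumberField

variable {K : Type*} [Field K] [NumberField K]

theorem natCast_dvd_discr_of_sq_eq_squarefree {x : K} {s : ℤ} (hx : x ^ 2 = s)
    (hs : Squarefree s) {p : ℕ} (hp : p.Prime) (hps : (p : ℤ) ∣ s) : (p : ℤ) ∣ discr K := by
  have := Fact.mk hp
  have hint : IsIntegral ℤ x := IsIntegral.of_pow two_pos (hx ▸ isIntegral_algebraMap (x := s))
  let y : 𝓞 K := ⟨x, hint⟩
  have hy : y ^ 2 = s := RingOfIntegers.ext (by push_cast; exact hx)
  refine natCast_dvd_discr_of_dvd_pow (RingOfIntegers.basis K) (x := y) (m := 2) ?_ ?_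
  · rw [hy]
    exact_mod_cast Int.cast_dvd_cast _ _ hps
  · rintro ⟨z, hz⟩
    have hp2 : ((p * p : ℤ) : 𝓞 K) ∣ (s : 𝓞 K) := ⟨z ^ 2, by rw [← hy, hz]; push_cast; ring⟩
    exact (Nat.prime_iff_prime_int.mp hp).not_isUnit (hs _ (Int.dvd_of_cast_dvd_cast hp2))

theorem primeFactors_natAbs_subset_of_sq_eq_squarefree {x : K} {s : ℤ} (hx : x ^ 2 = s)
    (hs : Squarefree s) : s.natAbs.primeFactors ⊆ (discr K).natAbs.primeFactors := by
  intro p hp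
  rw [Nat.mem_primeFactors] at hp ⊢
  exact ⟨hp.1, Int.natCast_dvd.mp
    (natCast_dvd_discr_of_sq_eq_squarefree hx hs hp.1 (Int.natCast_dvd.mpr hp.2.1)),
    Int.natAbs_ne_zero.mpr (discr_ne_zero K)⟩

end NumberField

theorem card_le_of_injective_squarefree {V : Type*} [Fintype V] {s : V → ℤ}
    (hinj : Function.Injective s) (hsf : ∀ v, Squarefree (s v)) {P : Finset ℕ}
    (hP : ∀ v, (s v).natAbs.primeFactors ⊆ P) : Fintype.card V ≤ 2 * 2 ^ P.card := by
  classical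
  -- a squarefree integer is determined by its sign and its prime factors
  have key := Finset.card_le_card_of_injOn (s := Finset.univ)
    (t := (Finset.univ : Finset Bool) ×ˢ P.powerset)
    (fun v => (decide (0 ≤ s v), (s v).natAbs.primeFactors))
    (fun v _ => Finset.mem_product.2 ⟨Finset.mem_univ _, Finset.mem_powerset.2 (hP v)⟩)
    (fun v _ w _ h => by
      simp only [Prod.mk.injEq, decide_eq_decide] at h
      have habs : (s v).natAbs = (s w).natAbs := by
        rw [← Nat.prod_primeFactors_of_squarefree (Int.squarefree_natAbs.mpr (hsf v)), h.2,
          Nat.prod_primeFactors_of_squarefree (Int.squarefree_natAbs.mpr (hsf w))]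
      have := (hsf v).ne_zero
      have := (hsf w).ne_zero
      exact hinj (by omega))
  simpa [Finset.card_product] using key

theorem ncard_setOf_prime_dvd {d : ℤ} (hd : d ≠ 0) :
    {p : ℕ | p.Prime ∧ (p : ℤ) ∣ d}.ncard = d.natAbs.primeFactors.card := by
  rw [← Set.ncard_coe_finset]
  congr 1
  ext p
  simp [Nat.mem_primeFactors, Int.natCast_dvd, hd]

theorem stmt_9_general (n : ℕ) (a : Fin n → ℤ)
    (K : Type*) [Field K] [NumberField K] (α : Fin n → K) (hα : ∀ i, (α i) ^ 2 = (a i : K))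
    (hgen : ∀ x : K, x ∈ Algebra.adjoin ℚ (Set.range α))
    (hdeg : Module.finrank ℚ K = 2 ^ n) :
    n - 1 ≤ {p : ℕ | p.Prime ∧ (p : ℤ) ∣ NumberField.discr K}.ncard := by
  have hα' : ∀ i, α i ^ 2 = algebraMap ℚ K (a i) := by simpa using hα
  have hli : LinearIndependent ℚ (squarefreeMonomial α) :=
    linearIndependent_squarefreeMonomial hα' (Algebra.eq_top_iff.2 hgen) (by simpa using hdeg)
  have hsq (v : Fin n → ZMod 2) :
      squarefreeMonomial α v ^ 2 = ((∏ i, a i ^ (v i).val : ℤ) : K) := by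
    simpa using squarefreeMonomial_sq hα' v
  choose s hs q hq hqs using fun v => exists_smul_sq_eq_squarefree (hli.ne_zero v) (hsq v)
  have hinj : Function.Injective s := fun v w h =>
    hli.eq_of_sq_smul_eq_sq_smul (hq v) (by rw [hqs, hqs, h])
  have hcard := card_le_of_injective_squarefree hinj hs
    (fun v => primeFactors_natAbs_subset_of_sq_eq_squarefree (hqs v) (hs v))
  rw [ncard_setOf_prime_dvd (discr_ne_zero K)]
  rw [Fintype.card_fun, ZMod.card, Fintype.card_fin, ← pow_succ'] at hcard
  have := (Nat.pow_le_pow_iff_right (by norm_num)).mp hcard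
  omega

/-- If `K = ℚ(√a₁, ..., √aₙ)` is an imaginary `n`-quadratic field of degree `2ⁿ` over `ℚ`
(generated by square roots of integers, at least one negative), then at least `n - 1`
distinct rational primes ramify in `K` (i.e. divide its discriminant). -/
theorem stmt_9 (n : ℕ) (a : Fin n → ℤ) (hsf : ∀ i, Squarefree (a i))
    (K : Type*) [Field K] [NumberField K] (α : Fin n → K) (hα : ∀ i, (α i) ^ 2 = (a i : K))
    (hgen : ∀ x : K, x ∈ Algebra.adjoin ℚ (Set.range α))
    (hdeg : Module.finrank ℚ K = 2 ^ n) (him : ∃ i, a i < 0) :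
    n - 1 ≤ {p : ℕ | p.Prime ∧ (p : ℤ) ∣ NumberField.discr K}.ncard :=
  stmt_9_general n a K α hα hgen hdeg
end

section
/- For the imaginary biquadratic field K = Q(√-3, √2), the unit group E(K) equals the product E(Q(√2))·E(Q(√-3))·E(Q(√-6)) of the unit groups of its three quadratic subfields; equivalently, the unit index q(K/Q) = [E(K) : E(Q(√2))E(Q(√-3))E(Q(√-6))] equals 1. -/
/-!
Let `negR` and `negS` be the automorphisms of `K = ℚ(√-3, √2)` fixing `√2` and `√-3`
respectively; under every embedding into `ℂ`, `negR` is complex conjugation. For a unit `u`,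
`u · negR u = |u|²` is a totally positive unit `p + q√2` of `ℚ(√2)`, so `p > 0` and
`p² - 2q² = 1`. Factoring `(p - 1)(p + 1) = 2q²` shows that such a unit is a square `X²` with
`X = c + d√2`. Then `w = u / X` satisfies `w · negR w = 1`, so all conjugates of `w` have absolute
value `1` and `w` is a root of unity (Kronecker). Every unit `v` satisfies
`v² · τ(v σv) = (v τv)(v στv)` (with `σ = negR`, `τ = negS`), whose factors lie in the three
quadratic subfields; as `K` contains no `√-1`, this also puts every root of unity into the product.
-/

open NumberField ComplexConjugate

theorem Rat.sq_ne_natCast {n : ℕ} (hn : ¬ IsSquare n) (q : ℚ) : q ^ 2 ≠ n := fun h =>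
  hn (Rat.isSquare_natCast_iff.mp ⟨q, by rw [← h, sq]⟩)

theorem Int.exists_sq_sq_of_mul_eq_sq {a b e : ℤ} (ha : 0 ≤ a) (hb : 0 ≤ b) (hab : IsCoprime a b)
    (h : a * b = e ^ 2) : ∃ c d : ℤ, a = c ^ 2 ∧ b = d ^ 2 ∧ e = c * d := by
  have sq_of_nonneg {x : ℤ} (hx : 0 ≤ x) (hsq : ∃ x0, x = x0 ^ 2 ∨ x = -x0 ^ 2) :
      ∃ y, x = y ^ 2 := by
    obtain ⟨x0, rfl | rfl⟩ := hsq
    · exact ⟨x0, rfl⟩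
    · exact ⟨0, by nlinarith [sq_nonneg x0]⟩
  obtain ⟨c, rfl⟩ := sq_of_nonneg ha (Int.sq_of_isCoprime hab h)
  obtain ⟨d, rfl⟩ := sq_of_nonneg hb (Int.sq_of_isCoprime hab.symm (by rw [mul_comm, h]))
  rcases sq_eq_sq_iff_eq_or_eq_neg.mp (show e ^ 2 = (c * d) ^ 2 by rw [← h]; ring) with he | he
  · exact ⟨c, d, rfl, rfl, he⟩
  · exact ⟨-c, d, by ring, rfl, by rw [he]; ring⟩

/-- That is, `p + q√2 = (c + d√2)²`. -/
theorem Int.exists_sq_of_pell {p q : ℤ} (hp : 0 < p) (h : p ^ 2 - 2 * q ^ 2 = 1) :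
    ∃ c d : ℤ, p = c ^ 2 + 2 * d ^ 2 ∧ q = 2 * c * d := by
  rcases Int.even_or_odd p with ⟨t, rfl⟩ | ⟨k, rfl⟩
  · have : 2 * (2 * t ^ 2 - q ^ 2) = 1 := by linear_combination h
    omega
  obtain ⟨e, rfl⟩ : Even q := by
    rcases Int.even_or_odd q with he | ⟨e, rfl⟩
    · exact he
    · have : 4 * (k ^ 2 + k - 2 * e ^ 2 - 2 * e) = 2 := by linear_combination h
      omega
  have hk : k * (k + 1) = 2 * e ^ 2 := mul_left_cancel₀ four_ne_zero (by linear_combination h)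
  -- one of the coprime factors `k`, `k + 1` is even, and the halved product is a square
  rcases Int.even_or_odd k with ⟨m, rfl⟩ | ⟨m, rfl⟩
  · obtain ⟨d, c, rfl, hc, rfl⟩ := exists_sq_sq_of_mul_eq_sq (a := m) (b := 2 * m + 1) (e := e)
      (by omega) (by omega) ⟨-2, 1, by ring⟩
      (mul_left_cancel₀ two_ne_zero (by linear_combination hk))
    exact ⟨c, d, by linear_combination hc, by ring⟩
  · obtain ⟨c, d, hc, hd, rfl⟩ := exists_sq_sq_of_mul_eq_sq (a := 2 * m + 1) (b := m + 1) (e := e)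
      (by omega) (by omega) ⟨-1, 2, by ring⟩
      (mul_left_cancel₀ two_ne_zero (by linear_combination hk))
    exact ⟨c, d, by linear_combination hc + 2 * hd, by ring⟩

theorem Rat.exists_int_of_pell {p q : ℚ} (h : p ^ 2 - 2 * q ^ 2 = 1) {P Q : ℤ} (hP : P = 2 * p)
    (hQ : Q = 4 * q) : ∃ m n : ℤ, m = p ∧ n = q := by
  have h8 : 2 * P ^ 2 - Q ^ 2 = 8 := by
    have : ((2 * P ^ 2 - Q ^ 2 : ℤ) : ℚ) = 8 := by push_cast [hP, hQ]; linear_combination 8 * h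
    exact_mod_cast this
  obtain ⟨t, rfl⟩ : Even Q := by
    rcases Int.even_or_odd Q with he | ⟨t, rfl⟩
    · exact he
    · have : 2 * (P ^ 2 - 2 * t ^ 2 - 2 * t - 4) = 1 := by linear_combination h8
      omega
  obtain ⟨j, rfl⟩ : Even P := by
    rcases Int.even_or_odd P with he | ⟨j, rfl⟩
    · exact he
    · have : 4 * (2 * j ^ 2 + 2 * j - t ^ 2) = 6 := by linear_combination h8
      omega
  obtain ⟨i, rfl⟩ : Even t := by
    rcases Int.even_or_odd t with he | ⟨i, rfl⟩
    · exact he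
    · have : 8 * (j ^ 2 - 2 * i ^ 2 - 2 * i) = 12 := by linear_combination h8
      omega
  refine ⟨j, i, ?_, ?_⟩
  · push_cast at hP; linarith
  · push_cast at hQ; linarith

namespace Complex

theorem conj_eq_neg_of_sq_eq_neg {z : ℂ} {x : ℝ} (hx : 0 < x) (h : z ^ 2 = -x) :
    conj z = -z := by
  have hre := congrArg re h
  have him := congrArg im h
  simp only [sq, mul_re, mul_im, neg_re, ofReal_re, neg_im, ofReal_im, neg_zero] at hre him
  have : z.re = 0 := by
    rcases mul_eq_zero.mp (show z.re * z.im = 0 by linarith) with h0 | h0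
    · exact h0
    · nlinarith [mul_self_nonneg z.re]
  exact Complex.ext (by simp [this]) (by simp)

theorem conj_eq_self_of_sq_eq {z : ℂ} {x : ℝ} (hx : 0 < x) (h : z ^ 2 = x) : conj z = z := by
  have hre := congrArg re h
  have him := congrArg im h
  simp only [sq, mul_re, mul_im, ofReal_re, ofReal_im] at hre him
  have : z.im = 0 := by
    rcases mul_eq_zero.mp (show z.re * z.im = 0 by linarith) with h0 | h0
    · nlinarith [mul_self_nonneg z.im]
    · exact h0
  exact Complex.ext (by simp) (by simp [this])

end Complex

theorem Rat.exists_intCast_eq_of_isIntegral {K : Type*} [Field K] [CharZero K] {x : ℚ}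
    (hx : IsIntegral ℤ (x : K)) : ∃ n : ℤ, (n : ℚ) = x :=
  IsIntegrallyClosed.isIntegral_iff.mp <|
    IsIntegral.tower_bot (B := K) (algebraMap ℚ K).injective (by rwa [eq_ratCast])

theorem Rat.eq_one_of_isIntegral {K : Type*} [Field K] [CharZero K] {q : ℚ} (hq : 0 < q)
    (h : IsIntegral ℤ (q : K)) (h' : IsIntegral ℤ ((q⁻¹ : ℚ) : K)) : q = 1 := by
  obtain ⟨n, rfl⟩ := Rat.exists_intCast_eq_of_isIntegral h
  obtain ⟨m, hm⟩ := Rat.exists_intCast_eq_of_isIntegral h'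
  have : n * m = 1 := by
    have : (n : ℚ) ≠ 0 := hq.ne'
    exact_mod_cast (show (n : ℚ) * m = 1 by rw [hm]; field_simp)
  rcases Int.eq_one_or_neg_one_of_mul_eq_one this with rfl | rfl
  · rfl
  · norm_num at hq

theorem add_mul_mem_adjoin {A : Type*} [DivisionRing A] [CharZero A] (p q : ℚ) (t : A) :
    (p : A) + q * t ∈ Algebra.adjoin ℚ {t} := by
  rw [← eq_ratCast (algebraMap ℚ A), ← Rat.smul_def]
  exact add_mem (Subalgebra.algebraMap_mem _ p)
    (Subalgebra.smul_mem _ (Algebra.self_mem_adjoin_singleton ℚ t) q)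

theorem Subgroup.mem_of_odd_pow_mem_of_sq_mem {G : Type*} [Group G] {H : Subgroup G} {g : G}
    {m : ℕ} (hm : Odd m) (hgm : g ^ m ∈ H) (hg2 : g ^ 2 ∈ H) : g ∈ H := by
  obtain ⟨t, rfl⟩ := hm
  rw [show g = g ^ (2 * t + 1) * ((g ^ 2) ^ t)⁻¹ by group]
  exact mul_mem hgm (inv_mem (pow_mem hg2 t))

section Coordinates

variable {K : Type*} [Field K] [CharZero K] {r s : K}

theorem eq_zero_of_add_mul_sqrt_two_eq_zero (hs : s ^ 2 = 2) {c d : ℚ} (h : (c : K) + d * s = 0) :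
    c = 0 ∧ d = 0 := by
  by_cases hd : d = 0
  · subst hd
    exact ⟨by simpa using h, rfl⟩
  · have hs' : s = ((-c / d : ℚ) : K) := by
      push_cast
      field_simp
      linear_combination h
    rw [hs'] at hs
    exact absurd (by exact_mod_cast hs) (Rat.sq_ne_natCast (n := 2) (by decide +kernel) _)

theorem coords_eq_zero (hr : r ^ 2 = -3) (hs : s ^ 2 = 2) {a b c d : ℚ}
    (h : (a : K) + b * r + c * s + d * (r * s) = 0) : a = 0 ∧ b = 0 ∧ c = 0 ∧ d = 0 := by
  -- square `a + c s = -(b + d s) r` and compare the rational parts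
  have key : ((a ^ 2 + 3 * b ^ 2 + 2 * c ^ 2 + 6 * d ^ 2 : ℚ) : K)
      + ((2 * a * c + 6 * b * d : ℚ)) * s = 0 := by
    push_cast
    linear_combination ((a : K) + c * s - (b + d * s) * r) * h + (b + d * s) ^ 2 * hr
      - (c ^ 2 + 3 * d ^ 2 : K) * hs
  have := (eq_zero_of_add_mul_sqrt_two_eq_zero hs key).1
  refine ⟨?_, ?_, ?_, ?_⟩ <;> nlinarith [sq_nonneg a, sq_nonneg b, sq_nonneg c, sq_nonneg d]

theorem coords_mul {u v : K} (hu : u ^ 2 = -3) (hv : v ^ 2 = 2) (a b c d a' b' c' d' : ℚ) :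
    ((a : K) + b * u + c * v + d * (u * v)) * ((a' : K) + b' * u + c' * v + d' * (u * v)) =
      ((a * a' - 3 * b * b' + 2 * c * c' - 6 * d * d' : ℚ) : K)
        + ((a * b' + b * a' + 2 * (c * d' + d * c') : ℚ)) * u
        + ((a * c' + c * a' - 3 * (b * d' + d * b') : ℚ)) * v
        + ((a * d' + d * a' + b * c' + c * b' : ℚ)) * (u * v) := by
  push_cast
  linear_combination ((b : K) * b' + (b * d' + d * b') * v + d * d' * v ^ 2) * hu
    + ((c : K) * c' + (c * d' + d * c') * u - 3 * d * d') * hv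

theorem linearIndependent_coords (hr : r ^ 2 = -3) (hs : s ^ 2 = 2) :
    LinearIndependent ℚ ![1, r, s, r * s] := by
  refine Fintype.linearIndependent_iff.mpr fun g hg => ?_
  simp only [Fin.sum_univ_four, Matrix.cons_val, Rat.smul_def, mul_one] at hg
  obtain ⟨h0, h1, h2, h3⟩ := coords_eq_zero hr hs hg
  intro i
  fin_cases i <;> assumption

end Coordinates

structure IsSqrtNegThreeSqrtTwo {K : Type*} [Field K] [CharZero K] (r s : K) : Prop where
  r_sq : r ^ 2 = -3
  s_sq : s ^ 2 = 2
  adjoin_eq_top : Algebra.adjoin ℚ {r, s} = ⊤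

namespace IsSqrtNegThreeSqrtTwo

variable {K : Type*} [Field K] [CharZero K] {r s : K}

theorem exists_coords (h : IsSqrtNegThreeSqrtTwo r s) (x : K) :
    ∃ a b c d : ℚ, x = (a : K) + b * r + c * s + d * (r * s) := by
  let S : Subalgebra ℚ K :=
    { carrier := {x | ∃ a b c d : ℚ, x = (a : K) + b * r + c * s + d * (r * s)}
      mul_mem' := by
        rintro _ _ ⟨a, b, c, d, rfl⟩ ⟨a', b', c', d', rfl⟩
        exact ⟨_, _, _, _, coords_mul h.r_sq h.s_sq a b c d a' b' c' d'⟩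
      add_mem' := by
        rintro _ _ ⟨a, b, c, d, rfl⟩ ⟨a', b', c', d', rfl⟩
        exact ⟨a + a', b + b', c + c', d + d', by push_cast; ring⟩
      algebraMap_mem' := fun q => ⟨q, 0, 0, 0, by simp [eq_ratCast]⟩ }
  have hle : Algebra.adjoin ℚ {r, s} ≤ S := by
    refine Algebra.adjoin_le ?_
    rintro _ (rfl | rfl)
    · exact ⟨0, 1, 0, 0, by simp⟩
    · exact ⟨0, 0, 1, 0, by simp⟩
  exact hle (h.adjoin_eq_top ▸ Algebra.mem_top)

noncomputable def basis (h : IsSqrtNegThreeSqrtTwo r s) : Module.Basis (Fin 4) ℚ K :=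
  .mk (linearIndependent_coords h.r_sq h.s_sq) fun x _ => by
    obtain ⟨a, b, c, d, rfl⟩ := h.exists_coords x
    refine Submodule.mem_span_range_iff_exists_fun ℚ |>.mpr ⟨![a, b, c, d], ?_⟩
    simp [Fin.sum_univ_four, Rat.smul_def]

theorem basis_constr_coords (h : IsSqrtNegThreeSqrtTwo r s) {L : Type*} [Field L] [CharZero L]
    (u v : L) (a b c d : ℚ) :
    h.basis.constr ℚ ![1, u, v, u * v] (a + b * r + c * s + d * (r * s)) =
      a + b * u + c * v + d * (u * v) := by
  set f := h.basis.constr ℚ ![1, u, v, u * v]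
  have hb (i : Fin 4) : f (![1, r, s, r * s] i) = ![1, u, v, u * v] i := by
    rw [← Module.Basis.mk_apply (linearIndependent_coords h.r_sq h.s_sq)]
    exact h.basis.constr_basis ℚ _ i
  obtain ⟨h0, h1, h2, h3⟩ : f 1 = 1 ∧ f r = u ∧ f s = v ∧ f (r * s) = u * v :=
    ⟨hb 0, hb 1, hb 2, hb 3⟩
  rw [show (a : K) + b * r + c * s + d * (r * s) = a • (1 : K) + b • r + c • s + d • (r * s) by
      simp [Rat.smul_def],
    map_add, map_add, map_add, map_smul, map_smul, map_smul, map_smul, h0, h1, h2, h3]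
  simp only [Rat.smul_def, mul_one]

noncomputable def lift (h : IsSqrtNegThreeSqrtTwo r s) {L : Type*} [Field L] [CharZero L]
    {u v : L} (hu : u ^ 2 = -3) (hv : v ^ 2 = 2) : K →ₐ[ℚ] L :=
  .ofLinearMap (h.basis.constr ℚ ![1, u, v, u * v])
    (by simpa using h.basis_constr_coords u v 1 0 0 0) fun x y => by
      obtain ⟨a, b, c, d, rfl⟩ := h.exists_coords x
      obtain ⟨a', b', c', d', rfl⟩ := h.exists_coords y
      rw [coords_mul h.r_sq h.s_sq, h.basis_constr_coords, h.basis_constr_coords,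
        h.basis_constr_coords, coords_mul hu hv]

variable {L : Type*} [Field L] [CharZero L] {u v : L}

@[simp]
theorem lift_r (h : IsSqrtNegThreeSqrtTwo r s) (hu : u ^ 2 = -3) (hv : v ^ 2 = 2) :
    h.lift hu hv r = u := by
  have := h.basis_constr_coords u v 0 1 0 0
  simp only [Rat.cast_zero, Rat.cast_one, zero_mul, one_mul, zero_add, add_zero] at this
  exact this

@[simp]
theorem lift_s (h : IsSqrtNegThreeSqrtTwo r s) (hu : u ^ 2 = -3) (hv : v ^ 2 = 2) :
    h.lift hu hv s = v := by
  have := h.basis_constr_coords u v 0 0 1 0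
  simp only [Rat.cast_zero, Rat.cast_one, zero_mul, one_mul, zero_add, add_zero] at this
  exact this

theorem algHom_ext (h : IsSqrtNegThreeSqrtTwo r s) {f g : K →ₐ[ℚ] L} (hr : f r = g r)
    (hs : f s = g s) : f = g :=
  AlgHom.ext_of_adjoin_eq_top h.adjoin_eq_top <| by rintro _ (rfl | rfl) <;> assumption

noncomputable def negR (h : IsSqrtNegThreeSqrtTwo r s) : K →ₐ[ℚ] K :=
  h.lift (u := -r) (by rw [neg_sq, h.r_sq]) h.s_sq

noncomputable def negS (h : IsSqrtNegThreeSqrtTwo r s) : K →ₐ[ℚ] K :=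
  h.lift (v := -s) h.r_sq (by rw [neg_sq, h.s_sq])

@[simp] theorem negR_r (h : IsSqrtNegThreeSqrtTwo r s) : h.negR r = -r := h.lift_r _ _
@[simp] theorem negR_s (h : IsSqrtNegThreeSqrtTwo r s) : h.negR s = s := h.lift_s _ _
@[simp] theorem negS_r (h : IsSqrtNegThreeSqrtTwo r s) : h.negS r = r := h.lift_r _ _
@[simp] theorem negS_s (h : IsSqrtNegThreeSqrtTwo r s) : h.negS s = -s := h.lift_s _ _

@[simp]
theorem negR_negR (h : IsSqrtNegThreeSqrtTwo r s) (x : K) : h.negR (h.negR x) = x :=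
  DFunLike.congr_fun (h.algHom_ext (f := h.negR.comp h.negR) (g := .id ℚ K) (by simp) (by simp)) x

@[simp]
theorem negS_negS (h : IsSqrtNegThreeSqrtTwo r s) (x : K) : h.negS (h.negS x) = x :=
  DFunLike.congr_fun (h.algHom_ext (f := h.negS.comp h.negS) (g := .id ℚ K) (by simp) (by simp)) x

theorem negR_negS (h : IsSqrtNegThreeSqrtTwo r s) (x : K) :
    h.negR (h.negS x) = h.negS (h.negR x) :=
  DFunLike.congr_fun
    (h.algHom_ext (f := h.negR.comp h.negS) (g := h.negS.comp h.negR) (by simp) (by simp)) x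

theorem exists_eq_of_negR_eq (h : IsSqrtNegThreeSqrtTwo r s) {x : K} (hx : h.negR x = x) :
    ∃ p q : ℚ, x = p + q * s := by
  obtain ⟨a, b, c, d, rfl⟩ := h.exists_coords x
  simp only [map_add, map_mul, map_ratCast, negR_r, negR_s] at hx
  obtain ⟨-, hb, -, hd⟩ := coords_eq_zero h.r_sq h.s_sq (a := 0) (b := 2 * b) (c := 0) (d := 2 * d)
    (by push_cast; linear_combination -hx)
  exact ⟨a, c, by simp [show b = 0 by linarith, show d = 0 by linarith]⟩

theorem exists_eq_of_negS_eq (h : IsSqrtNegThreeSqrtTwo r s) {x : K} (hx : h.negS x = x) :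
    ∃ p q : ℚ, x = p + q * r := by
  obtain ⟨a, b, c, d, rfl⟩ := h.exists_coords x
  simp only [map_add, map_mul, map_ratCast, negS_r, negS_s] at hx
  obtain ⟨-, -, hc, hd⟩ := coords_eq_zero h.r_sq h.s_sq (a := 0) (b := 0) (c := 2 * c) (d := 2 * d)
    (by push_cast; linear_combination -hx)
  exact ⟨a, b, by simp [show c = 0 by linarith, show d = 0 by linarith]⟩

theorem exists_eq_of_negR_negS_eq (h : IsSqrtNegThreeSqrtTwo r s) {x : K}
    (hx : h.negR (h.negS x) = x) : ∃ p q : ℚ, x = p + q * (r * s) := by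
  obtain ⟨a, b, c, d, rfl⟩ := h.exists_coords x
  simp only [map_add, map_mul, map_ratCast, negS_r, negS_s, map_neg, negR_r, negR_s] at hx
  obtain ⟨-, hb, hc, -⟩ := coords_eq_zero h.r_sq h.s_sq (a := 0) (b := 2 * b) (c := 2 * c) (d := 0)
    (by push_cast; linear_combination -hx)
  exact ⟨a, d, by simp [show b = 0 by linarith, show c = 0 by linarith]⟩

theorem map_negR (h : IsSqrtNegThreeSqrtTwo r s) (φ : K →+* ℂ) (x : K) :
    φ (h.negR x) = conj (φ x) := by
  have hφr : φ r ^ 2 = -((3 : ℝ) : ℂ) := by rw [← map_pow, h.r_sq, map_neg, map_ofNat]; simp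
  have hφs : φ s ^ 2 = ((2 : ℝ) : ℂ) := by rw [← map_pow, h.s_sq, map_ofNat]; simp
  have := h.algHom_ext (f := (φ.comp h.negR.toRingHom).toRatAlgHom)
    (g := ((starRingEnd ℂ).comp φ).toRatAlgHom)
    (by simp [Complex.conj_eq_neg_of_sq_eq_neg three_pos hφr])
    (by simp [Complex.conj_eq_self_of_sq_eq two_pos hφs])
  exact DFunLike.congr_fun this x

theorem map_mul_negR (h : IsSqrtNegThreeSqrtTwo r s) (φ : K →+* ℂ) (x : K) :
    φ (x * h.negR x) = (Complex.normSq (φ x) : ℂ) := by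
  rw [map_mul, h.map_negR, Complex.mul_conj]

end IsSqrtNegThreeSqrtTwo

section NumberField

variable {K : Type*} [Field K] [NumberField K] {r s : K}

noncomputable def unitsMap (g : K →ₐ[ℚ] K) : (𝓞 K)ˣ →* (𝓞 K)ˣ :=
  Units.map (RingOfIntegers.mapRingHom g.toRingHom : 𝓞 K →* 𝓞 K)

@[simp]
theorem coe_unitsMap (g : K →ₐ[ℚ] K) (u : (𝓞 K)ˣ) : ((unitsMap g u : 𝓞 K) : K) = g u := rfl

/-- `E(ℚ(√2)) E(ℚ(√-3)) E(ℚ(√-6))` inside `E(K)`. -/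
def quadraticSubfieldUnits (r s : K) : Subgroup (𝓞 K)ˣ :=
  Subgroup.closure {v | algebraMap (𝓞 K) K v ∈ Algebra.adjoin ℚ {s} ∨
    algebraMap (𝓞 K) K v ∈ Algebra.adjoin ℚ {r} ∨ algebraMap (𝓞 K) K v ∈ Algebra.adjoin ℚ {r * s}}

namespace IsSqrtNegThreeSqrtTwo

theorem sq_ne_neg_one (h : IsSqrtNegThreeSqrtTwo r s) (x : K) : x ^ 2 ≠ -1 := by
  intro hx
  obtain ⟨φ⟩ : Nonempty (K →+* ℂ) := inferInstance
  have hσx : h.negR x = -x := φ.injective <| by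
    rw [h.map_negR, map_neg]
    exact Complex.conj_eq_neg_of_sq_eq_neg one_pos (by rw [← map_pow, hx]; simp)
  -- `r x` is fixed by `negR`, so it lies in `ℚ(√2)`, but its square is `3`
  obtain ⟨p, q, hpq⟩ := h.exists_eq_of_negR_eq (x := r * x) (by simp [hσx])
  obtain ⟨h1, h2⟩ := eq_zero_of_add_mul_sqrt_two_eq_zero h.s_sq (c := p ^ 2 + 2 * q ^ 2 - 3)
    (d := 2 * p * q) (by
      push_cast
      linear_combination (p + q * s + r * x) * hpq.symm - q ^ 2 * h.s_sq + x ^ 2 * h.r_sq - 3 * hx)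
  rcases mul_eq_zero.mp h2 with hp | rfl
  · exact Rat.sq_ne_natCast (n := 6) (by decide +kernel) (2 * q) (by
      push_cast
      linear_combination 2 * h1 - p * hp)
  · exact Rat.sq_ne_natCast (n := 3) (by decide +kernel) p (by
      push_cast
      linear_combination h1)

theorem eq_one_or_neg_one_of_pow_two_pow_eq_one (h : IsSqrtNegThreeSqrtTwo r s) {x : K}
    {k : ℕ} (hx : x ^ 2 ^ k = 1) : x = 1 ∨ x = -1 := by
  induction k generalizing x with
  | zero => exact .inl (by simpa using hx)
  | succ k ih =>
    rcases ih (x := x ^ 2) (by rwa [← pow_mul, ← pow_succ']) with hx2 | hx2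
    · exact mul_self_eq_one_iff.mp (by rw [← sq, hx2])
    · exact absurd hx2 (h.sq_ne_neg_one x)

theorem mem_quadraticSubfieldUnits (h : IsSqrtNegThreeSqrtTwo r s) {v : (𝓞 K)ˣ}
    (hv : h.negR v = v ∨ h.negS v = v ∨ h.negR (h.negS v) = v) :
    v ∈ quadraticSubfieldUnits r s := by
  apply Subgroup.subset_closure
  rcases hv with hv | hv | hv
  · obtain ⟨p, q, hpq⟩ := h.exists_eq_of_negR_eq hv
    exact .inl (hpq ▸ add_mul_mem_adjoin p q s)
  · obtain ⟨p, q, hpq⟩ := h.exists_eq_of_negS_eq hv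
    exact .inr (.inl (hpq ▸ add_mul_mem_adjoin p q r))
  · obtain ⟨p, q, hpq⟩ := h.exists_eq_of_negR_negS_eq hv
    exact .inr (.inr (hpq ▸ add_mul_mem_adjoin p q (r * s)))

theorem sq_mem_quadraticSubfieldUnits (h : IsSqrtNegThreeSqrtTwo r s) (u : (𝓞 K)ˣ) :
    u ^ 2 ∈ quadraticSubfieldUnits r s := by
  set σ := unitsMap h.negR
  set τ := unitsMap h.negS
  have hr : u * τ u ∈ quadraticSubfieldUnits r s :=
    h.mem_quadraticSubfieldUnits (.inr (.inl (by simp [τ, mul_comm])))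
  have hrs : u * σ (τ u) ∈ quadraticSubfieldUnits r s :=
    h.mem_quadraticSubfieldUnits (.inr (.inr (by simp [σ, τ, h.negR_negS, mul_comm])))
  have hs : τ (u * σ u) ∈ quadraticSubfieldUnits r s :=
    h.mem_quadraticSubfieldUnits (.inl (by simp [σ, τ, h.negR_negS, mul_comm]))
  have key : u ^ 2 * τ (u * σ u) = u * τ u * (u * σ (τ u)) := by
    ext
    simp [σ, τ, h.negR_negS]
    ring
  exact (Subgroup.mul_mem_cancel_right _ hs).mp (key ▸ mul_mem hr hrs)

theorem mem_of_pow_eq_one (h : IsSqrtNegThreeSqrtTwo r s) {w : (𝓞 K)ˣ} {n : ℕ} (hn : n ≠ 0)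
    (hw : w ^ n = 1) : w ∈ quadraticSubfieldUnits r s := by
  obtain ⟨k, m, hm, rfl⟩ := Nat.exists_eq_two_pow_mul_odd hn
  refine Subgroup.mem_of_odd_pow_mem_of_sq_mem hm (h.mem_quadraticSubfieldUnits (.inl ?_))
    (h.sq_mem_quadraticSubfieldUnits w)
  have hwm : ((w : K) ^ m) ^ 2 ^ k = 1 := by
    rw [← pow_mul, mul_comm]
    simpa using congrArg (fun v : (𝓞 K)ˣ => (v : K)) hw
  rcases h.eq_one_or_neg_one_of_pow_two_pow_eq_one hwm with h1 | h1 <;> simp [h1]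

theorem mem_of_mul_negR_eq_one (h : IsSqrtNegThreeSqrtTwo r s) {w : (𝓞 K)ˣ}
    (hw : (w : K) * h.negR w = 1) : w ∈ quadraticSubfieldUnits r s := by
  obtain ⟨n, hn, hwn⟩ := Embeddings.pow_eq_one_of_norm_eq_one K ℂ
    (RingOfIntegers.isIntegral_coe (w : 𝓞 K)) fun φ => by
      have := h.map_mul_negR φ w
      rw [hw, map_one, eq_comm, Complex.ofReal_eq_one, Complex.normSq_eq_norm_sq] at this
      exact (pow_eq_one_iff_of_nonneg (norm_nonneg _) two_ne_zero).mp this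
  exact h.mem_of_pow_eq_one hn.ne' (by ext; simpa using hwn)

theorem isIntegral_s (h : IsSqrtNegThreeSqrtTwo r s) : IsIntegral ℤ s :=
  .of_pow two_pos <| by
    rw [h.s_sq, ← map_ofNat (algebraMap ℤ K)]
    exact isIntegral_algebraMap

theorem pos_of_mul_negR_eq (h : IsSqrtNegThreeSqrtTwo r s) {x : K} (hx : x ≠ 0) {p q : ℚ}
    (hpq : x * h.negR x = p + q * s) : 0 < p ∧ 0 < p ^ 2 - 2 * q ^ 2 := by
  obtain ⟨φ⟩ : Nonempty (K →+* ℂ) := inferInstance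
  have hA : (p : ℂ) + q * φ s = Complex.normSq (φ x) := by
    rw [← h.map_mul_negR, hpq]
    simp
  have hB : (p : ℂ) - q * φ s = Complex.normSq (φ (h.negS x)) := by
    rw [← h.map_mul_negR, h.negR_negS, ← map_mul, hpq]
    simp [sub_eq_add_neg]
  have hφs : φ s ^ 2 = 2 := by rw [← map_pow, h.s_sq, map_ofNat]
  have h₁ : 0 < Complex.normSq (φ x) := Complex.normSq_pos.mpr (by simpa using hx)
  have h₂ : 0 < Complex.normSq (φ (h.negS x)) := Complex.normSq_pos.mpr (by simpa using hx)
  have h2p : ((2 * p : ℚ) : ℝ) = Complex.normSq (φ x) + Complex.normSq (φ (h.negS x)) := by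
    apply Complex.ofReal_injective
    push_cast
    linear_combination hA + hB
  have hN : ((p ^ 2 - 2 * q ^ 2 : ℚ) : ℝ) =
      Complex.normSq (φ x) * Complex.normSq (φ (h.negS x)) := by
    apply Complex.ofReal_injective
    push_cast
    linear_combination (↑p - ↑q * φ s) * hA + Complex.normSq (φ x) * hB + q ^ 2 * hφs
  have hp : (0 : ℝ) < 2 * p := by exact_mod_cast h2p ▸ add_pos h₁ h₂
  exact ⟨by exact_mod_cast (by linarith : (0 : ℝ) < p), by exact_mod_cast hN ▸ mul_pos h₁ h₂⟩

theorem pell_of_mul_negR_eq (h : IsSqrtNegThreeSqrtTwo r s) (u : (𝓞 K)ˣ) {p q : ℚ}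
    (hpq : (u : K) * h.negR u = p + q * s) : p ^ 2 - 2 * q ^ 2 = 1 := by
  set a : (𝓞 K)ˣ := u * unitsMap h.negR u
  have ha : (a : K) = p + q * s := by simp [a, hpq]
  have hτa : (unitsMap h.negS a : K) = p - q * s := by simp [ha]; ring
  have hN : ((p ^ 2 - 2 * q ^ 2 : ℚ) : K) = ((a * unitsMap h.negS a : (𝓞 K)ˣ) : K) := by
    rw [Units.val_mul, map_mul, ha, hτa]
    push_cast
    linear_combination q ^ 2 * h.s_sq
  refine Rat.eq_one_of_isIntegral (K := K) (h.pos_of_mul_negR_eq (by simp) hpq).2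
    (hN ▸ RingOfIntegers.isIntegral_coe _) ?_
  rw [Rat.cast_inv, hN, ← map_units_inv]
  exact RingOfIntegers.isIntegral_coe _

theorem exists_int_of_mul_negR_eq (h : IsSqrtNegThreeSqrtTwo r s) (u : (𝓞 K)ˣ) {p q : ℚ}
    (hpq : (u : K) * h.negR u = p + q * s) : ∃ m n : ℤ, m = p ∧ n = q := by
  set a : (𝓞 K)ˣ := u * unitsMap h.negR u
  have ha : (a : K) = p + q * s := by simp [a, hpq]
  have hτa : (unitsMap h.negS a : K) = p - q * s := by simp [ha]; ring
  have h2p : ((2 * p : ℚ) : K) = a + unitsMap h.negS a := by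
    rw [ha, hτa]
    push_cast
    ring
  have h4q : ((4 * q : ℚ) : K) = (a - unitsMap h.negS a) * s := by
    rw [ha, hτa]
    push_cast
    linear_combination -2 * q * h.s_sq
  obtain ⟨P, hP⟩ := Rat.exists_intCast_eq_of_isIntegral <| h2p ▸
    (RingOfIntegers.isIntegral_coe (a : 𝓞 K)).add
      (RingOfIntegers.isIntegral_coe (unitsMap h.negS a : 𝓞 K))
  obtain ⟨Q, hQ⟩ := Rat.exists_intCast_eq_of_isIntegral <| h4q ▸
    ((RingOfIntegers.isIntegral_coe (a : 𝓞 K)).sub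
      (RingOfIntegers.isIntegral_coe (unitsMap h.negS a : 𝓞 K))).mul h.isIntegral_s
  exact Rat.exists_int_of_pell (h.pell_of_mul_negR_eq u hpq) hP hQ

theorem exists_int_pell (h : IsSqrtNegThreeSqrtTwo r s) (u : (𝓞 K)ˣ) :
    ∃ p q : ℤ, 0 < p ∧ p ^ 2 - 2 * q ^ 2 = 1 ∧ (u : K) * h.negR u = p + q * s := by
  obtain ⟨p, q, hpq⟩ := h.exists_eq_of_negR_eq (x := u * h.negR u) (by simp [mul_comm])
  obtain ⟨m, n, rfl, rfl⟩ := h.exists_int_of_mul_negR_eq u hpq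
  exact ⟨m, n, by exact_mod_cast (h.pos_of_mul_negR_eq (by simp) hpq).1,
    by exact_mod_cast h.pell_of_mul_negR_eq u hpq, by simpa using hpq⟩

theorem exists_unit_sq_eq (h : IsSqrtNegThreeSqrtTwo r s) (u : (𝓞 K)ˣ) :
    ∃ X : (𝓞 K)ˣ, h.negR X = X ∧ (X : K) ^ 2 = u * h.negR u := by
  obtain ⟨p, q, hp, hpq, hu⟩ := h.exists_int_pell u
  obtain ⟨c, d, rfl, rfl⟩ := Int.exists_sq_of_pell hp hpq
  set X : 𝓞 K := c + d * ⟨s, h.isIntegral_s⟩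
  have hX : algebraMap (𝓞 K) K X = c + d * s := by
    simp [X]
    rfl
  have hX2 : algebraMap (𝓞 K) K X ^ 2 = u * h.negR u := by
    rw [hX, hu]
    push_cast
    linear_combination (d : K) ^ 2 * h.s_sq
  obtain ⟨Y, hY⟩ : IsUnit X := (isUnit_pow_iff two_ne_zero).mp <| by
    convert (u * unitsMap h.negR u).isUnit
    ext
    simpa using hX2
  refine ⟨Y, ?_, ?_⟩
  · rw [hY, hX]; simp
  · rw [hY, hX2]

end IsSqrtNegThreeSqrtTwo

end NumberField

/-- For the imaginary biquadratic field `K = ℚ(√-3, √2)`, the unit group `E(K)` equals the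
product `E(ℚ(√2))·E(ℚ(√-3))·E(ℚ(√-6))` of the unit groups of its three quadratic
subfields; i.e. the unit index `q(K/ℚ)` equals 1. -/
theorem stmt_14 (K : Type*) [Field K] [NumberField K] (r s : K)
    (hr : r ^ 2 = -3) (hs : s ^ 2 = 2)
    (hgen : ∀ x : K, x ∈ Algebra.adjoin ℚ ({r, s} : Set K)) :
    Subgroup.closure {v : (𝓞 K)ˣ |
        algebraMap (𝓞 K) K (v : 𝓞 K) ∈ Algebra.adjoin ℚ ({s} : Set K) ∨
        algebraMap (𝓞 K) K (v : 𝓞 K) ∈ Algebra.adjoin ℚ ({r} : Set K) ∨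
        algebraMap (𝓞 K) K (v : 𝓞 K) ∈ Algebra.adjoin ℚ ({r * s} : Set K)} = ⊤ := by
  have h : IsSqrtNegThreeSqrtTwo r s := ⟨hr, hs, eq_top_iff.mpr fun x _ => hgen x⟩
  refine (Subgroup.eq_top_iff' _).mpr fun u => ?_
  obtain ⟨X, hXσ, hX⟩ := h.exists_unit_sq_eq u
  have hw : ((u * X⁻¹ : (𝓞 K)ˣ) : K) * h.negR (u * X⁻¹ : (𝓞 K)ˣ) = 1 := by
    have hX0 : (X : K) ≠ 0 := by simp
    simp [hXσ]
    field_simp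
    linear_combination -hX
  have := mul_mem (h.mem_of_mul_negR_eq_one hw) (h.mem_quadraticSubfieldUnits (.inl hXσ))
  rwa [inv_mul_cancel_right] at this
end

section
/- If K is an imaginary quadratic field of class number 1, then the absolute value of its squarefree radicand is either 1 or a prime number; consequently, if Q(√-a) has class number 1 with a squarefree and a > 1, then a is prime. -/
/-!
Write `a = p c` with `p` prime. If `a` is not prime then `c ≥ 2`, and since `a` is squarefree,
`p` and `c` are coprime, so the ideal `(p, √-a)` squares to `(p)`. When it is principal, generated
by `β`, the element `β²` is `p` times a unit; units have norm `1` because norms in an imaginary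
quadratic field are nonnegative, so `N β = p`. An integral `β` has the form `(s + t√-a)/2` with
`s t : ℤ`, which turns `N β = p` into `s² + a t² = 4p`; this has no solution, since `p ∣ s` reduces
it to `p k² + c t² = 4`.
-/

theorem Rat.exists_int_eq_of_squarefree_mul_sq {d : ℤ} (hd : Squarefree d) {q : ℚ} {n : ℤ}
    (h : d * q ^ 2 = n) : ∃ t : ℤ, q = t := by
  have hcop : IsCoprime ((q.den : ℤ) ^ 2) (q.num ^ 2) := by
    refine IsCoprime.pow (Int.isCoprime_iff_gcd_eq_one.mpr ?_)
    simpa [Int.gcd, Nat.coprime_comm] using q.reduced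
  have hnum : d * q.num ^ 2 = (q.den : ℤ) ^ 2 * n := by
    rw [← Rat.num_div_den q] at h
    field_simp at h
    exact_mod_cast h
  have hden : (q.den : ℤ) * q.den ∣ d := by
    rw [← sq]
    exact hcop.dvd_of_dvd_mul_left ⟨n, by rw [mul_comm, hnum]⟩
  have hunit : q.den = 1 := by
    simpa using Int.isUnit_iff_natAbs_eq.mp (hd _ hden)
  exact ⟨q.num, (Rat.coe_int_num_of_den_eq_one hunit).symm⟩

theorem Rat.exists_int_eq_of_isIntegral_algebraMap {A : Type*} [CommRing A] [Algebra ℚ A]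
    [Nontrivial A] {r : ℚ} (h : IsIntegral ℤ (algebraMap ℚ A r)) : ∃ n : ℤ, r = n := by
  rw [isIntegral_algebraMap_iff (algebraMap ℚ A).injective] at h
  obtain ⟨n, hn⟩ := IsIntegrallyClosed.isIntegral_iff.mp h
  exact ⟨n, by simpa using hn.symm⟩

theorem IsIntegral.star {R : Type*} [CommRing R] [StarRing R] {x : R} (hx : IsIntegral ℤ x) :
    IsIntegral ℤ (star x) :=
  hx.map (starRingEnd R).toIntAlgHom

namespace QuadraticAlgebra

section Rational

variable {a b : ℚ} {z : QuadraticAlgebra ℚ a b}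

theorem exists_int_norm_eq_of_isIntegral (hz : IsIntegral ℤ z) : ∃ n : ℤ, norm z = n :=
  Rat.exists_int_eq_of_isIntegral_algebraMap (by
    rw [algebraMap_norm_eq_mul_star]
    exact hz.mul hz.star)

theorem exists_int_trace_eq_of_isIntegral (hz : IsIntegral ℤ z) : ∃ n : ℤ, trace z = n :=
  Rat.exists_int_eq_of_isIntegral_algebraMap (by
    rw [algebraMap_trace_eq_add_star]
    exact hz.add hz.star)

theorem norm_nonneg (ha : a ≤ 0) (z : QuadraticAlgebra ℚ a 0) : 0 ≤ norm z := by
  rw [norm_def]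
  nlinarith [mul_self_nonneg z.re, mul_self_nonneg z.im]

theorem norm_eq_one_of_mul_eq_one (ha : a ≤ 0) {x y : QuadraticAlgebra ℚ a 0}
    (hx : IsIntegral ℤ x) (hy : IsIntegral ℤ y) (hxy : x * y = 1) : norm x = 1 := by
  obtain ⟨m, hm⟩ := exists_int_norm_eq_of_isIntegral hx
  obtain ⟨n, hn⟩ := exists_int_norm_eq_of_isIntegral hy
  have hmn : m * n = 1 := by
    have := congrArg norm hxy
    rw [map_mul, map_one, hm, hn] at this
    exact_mod_cast this
  have hm0 : 0 ≤ m := by exact_mod_cast hm ▸ norm_nonneg ha x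
  rw [hm, Int.eq_one_of_mul_eq_one_right hm0 hmn, Int.cast_one]

end Rational

theorem exists_int_of_isIntegral {d : ℤ} (hd : Squarefree d) {z : QuadraticAlgebra ℚ d 0}
    (hz : IsIntegral ℤ z) : ∃ s t : ℤ, z.re = s / 2 ∧ z.im = t / 2 := by
  obtain ⟨s, hs⟩ := exists_int_trace_eq_of_isIntegral hz
  obtain ⟨n, hn⟩ := exists_int_norm_eq_of_isIntegral hz
  rw [trace_def] at hs
  rw [norm_def] at hn
  obtain ⟨t, ht⟩ := Rat.exists_int_eq_of_squarefree_mul_sq hd (q := 2 * z.im) (n := s ^ 2 - 4 * n)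
    (by push_cast; linear_combination (2 * z.re + s) * hs - 4 * hn)
  exact ⟨s, t, by linarith, by linarith⟩

theorem exists_sq_sub_mul_sq_eq_four_mul {R : Type*} [CommRing R] [Algebra.IsIntegral ℤ R]
    {d : ℤ} (hd : Squarefree d) (hd0 : d ≤ 0) (f : R →+* QuadraticAlgebra ℚ d 0) {β : R} {n : ℕ}
    (h : Associated (β * β) (n : R)) : ∃ s t : ℤ, s ^ 2 - d * t ^ 2 = 4 * n := by
  have hint (x : R) : IsIntegral ℤ (f x) := (Algebra.IsIntegral.isIntegral x).map f.toIntAlgHom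
  obtain ⟨u, hu⟩ := h
  have hd0' : (d : ℚ) ≤ 0 := by exact_mod_cast hd0
  have hu1 : norm (f u) = 1 :=
    norm_eq_one_of_mul_eq_one hd0' (hint u) (hint ↑u⁻¹) (by rw [← map_mul, u.mul_inv, map_one])
  have hβ : norm (f β) ^ 2 = (n : ℚ) ^ 2 := by
    have := congrArg (fun x => norm (f x)) hu
    simpa [map_mul, hu1, sq] using this
  have hβn : norm (f β) = n :=
    (sq_eq_sq₀ (norm_nonneg hd0' _) (Nat.cast_nonneg n)).mp hβ
  obtain ⟨s, t, hs, ht⟩ := exists_int_of_isIntegral hd (hint β)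
  refine ⟨s, t, ?_⟩
  rw [norm_def, hs, ht] at hβn
  exact_mod_cast (by linear_combination 4 * hβn : ((s : ℚ) ^ 2 - d * t ^ 2 = 4 * n))

noncomputable def algEquivOfSqEq {F K : Type*} [Field F] [Field K] [Algebra F K] {d : F}
    [Fact (∀ r : F, r ^ 2 ≠ d + 0 * r)] (α : K) (hα : α ^ 2 = algebraMap F K d)
    (hgen : Algebra.adjoin F {α} = ⊤) : QuadraticAlgebra F d 0 ≃ₐ[F] K :=
  let φ := lift ⟨α, by rw [← sq, hα, Algebra.algebraMap_eq_smul_one, zero_smul, add_zero]⟩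
  AlgEquiv.ofBijective φ ⟨φ.toRingHom.injective, (φ.range_eq_top).mp <| top_le_iff.mp <|
    hgen ▸ Algebra.adjoin_le (Set.singleton_subset_iff.mpr ⟨ω, by simp [φ]⟩)⟩

end QuadraticAlgebra

theorem Ideal.span_pair_mul_self_eq_span_singleton {R : Type*} [CommRing R] {x y c : R}
    (hy : y * y = x * c) (hxc : IsCoprime x c) : span {x, y} * span {x, y} = span {x} := by
  obtain ⟨u, v, huv⟩ := hxc
  rw [span_pair_mul_span_pair]
  apply le_antisymm
  · simp only [span_le, Set.insert_subset_iff, Set.singleton_subset_iff, SetLike.mem_coe,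
      mem_span_singleton', hy]
    exact ⟨⟨x, mul_comm _ _⟩, ⟨y, mul_comm _ _⟩, ⟨y, rfl⟩, ⟨c, mul_comm _ _⟩⟩
  · rw [span_singleton_le_iff_mem]
    have hx : u * (x * x) + v * (y * y) = x := by linear_combination x * huv + v * hy
    have : u * (x * x) + v * (y * y) ∈ span {x * x, x * y, y * x, y * y} :=
      add_mem (mul_mem_left _ _ (subset_span (by simp))) (mul_mem_left _ _ (subset_span (by simp)))
    rwa [hx] at this

theorem exists_associated_mul_self_of_mul_self_eq {R : Type*} [CommRing R] [IsDomain R]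
    [IsPrincipalIdealRing R] {x y c : R} (hy : y * y = x * c) (hxc : IsCoprime x c) :
    ∃ β : R, Associated (β * β) x := by
  obtain ⟨β, hβ⟩ := Submodule.IsPrincipal.principal (Ideal.span {x, y})
  refine ⟨β, Ideal.span_singleton_eq_span_singleton.mp ?_⟩
  rw [← Ideal.span_pair_mul_self_eq_span_singleton hy hxc,
    ← Ideal.span_singleton_mul_span_singleton]
  exact congrArg₂ (· * ·) hβ.symm hβ.symm

theorem Nat.Prime.sq_add_mul_sq_ne_four_mul {p c : ℕ} (hp : p.Prime) (hc : 2 ≤ c)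
    (hsf : Squarefree (p * c)) (s t : ℤ) : s ^ 2 + (p * c : ℤ) * t ^ 2 ≠ 4 * p := by
  intro h
  obtain ⟨k, rfl⟩ : (p : ℤ) ∣ s := Int.Prime.dvd_pow' (k := 2) hp ⟨4 - c * t ^ 2, by linarith⟩
  have hp2 : (2 : ℤ) ≤ p := by exact_mod_cast hp.two_le
  have hkt : p * k ^ 2 + c * t ^ 2 = 4 :=
    mul_left_cancel₀ (by omega : (p : ℤ) ≠ 0) (by linear_combination h)
  have : (p = 2 ∧ c = 2) ∨ p = 4 ∨ c = 4 := by
    obtain ⟨hk1, hk2⟩ := abs_lt_of_sq_lt_sq' (b := (2 : ℤ)) (by nlinarith [sq_nonneg t]) zero_le_two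
    obtain ⟨ht1, ht2⟩ := abs_lt_of_sq_lt_sq' (b := (2 : ℤ)) (by nlinarith [sq_nonneg k]) zero_le_two
    interval_cases k <;> interval_cases t <;> omega
  rcases this with ⟨rfl, rfl⟩ | rfl | rfl
  · exact absurd (hsf 2 dvd_rfl) (by decide)
  · exact absurd hp (by decide)
  · exact absurd (hsf 2 ⟨p, by ring⟩) (by decide)

open NumberField

theorem NumberField.exists_sq_add_mul_sq_eq_four_mul {K : Type*} [Field K] [NumberField K]
    [IsPrincipalIdealRing (𝓞 K)] {p c : ℕ} (hsf : Squarefree (p * c)) (α : K)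
    (hα : α ^ 2 = -((p * c : ℕ) : K)) (hgen : Algebra.adjoin ℚ {α} = ⊤) :
    ∃ s t : ℤ, s ^ 2 + (p * c : ℤ) * t ^ 2 = 4 * p := by
  have hd : Squarefree (-((p * c : ℕ) : ℤ)) := fun x hx =>
    Int.squarefree_natCast.mpr hsf x (dvd_neg.mp hx)
  have : Fact (∀ r : ℚ, r ^ 2 ≠ ((-((p * c : ℕ) : ℤ) : ℤ) : ℚ) + 0 * r) := ⟨fun r hr => by
    have : (1 : ℚ) ≤ p * c := by exact_mod_cast Nat.one_le_iff_ne_zero.mpr hsf.ne_zero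
    push_cast at hr
    nlinarith [sq_nonneg r]⟩
  let e := QuadraticAlgebra.algEquivOfSqEq (d := ((-((p * c : ℕ) : ℤ) : ℤ) : ℚ)) α
    (by simp [hα]) hgen
  let θ : 𝓞 K := ⟨α, IsIntegral.of_pow two_pos (hα ▸ (isIntegral_natCast _).neg)⟩
  have hθ : θ * θ = p * -(c : 𝓞 K) := RingOfIntegers.coe_injective <| by
    simp only [map_mul, map_neg, map_natCast]
    change α * α = _
    rw [← sq, hα, Nat.cast_mul, mul_neg]
  have hpc : IsCoprime (p : 𝓞 K) (-(c : 𝓞 K)) := by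
    simpa using ((Nat.coprime_of_squarefree_mul hsf).isCoprime.map (Int.castRingHom _)).neg_right
  obtain ⟨β, hβ⟩ := exists_associated_mul_self_of_mul_self_eq hθ hpc
  obtain ⟨s, t, hst⟩ := QuadraticAlgebra.exists_sq_sub_mul_sq_eq_four_mul hd (by omega)
    (e.symm.toRingHom.comp (algebraMap (𝓞 K) K)) hβ
  exact ⟨s, t, by push_cast at hst; linear_combination hst⟩

theorem stmt_18_general (a : ℕ) (hsf : Squarefree a)
    (K : Type*) [Field K] [NumberField K] (α : K) (hα : α ^ 2 = -(a : K))
    (hgen : ∀ x : K, x ∈ Algebra.adjoin ℚ ({α} : Set K))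
    (h1 : NumberField.classNumber K = 1) :
    (a = 1 ∨ a.Prime) ∧ (1 < a → a.Prime) := by
  suffices h : a = 1 ∨ a.Prime from ⟨h, fun ha => h.resolve_left ha.ne'⟩
  by_contra! ⟨ha1, hnp⟩
  obtain ⟨p, hp, c, rfl⟩ := Nat.exists_prime_and_dvd ha1
  have hc : 2 ≤ c := by
    have : c ≠ 0 := by rintro rfl; exact hsf.ne_zero (mul_zero p)
    have : c ≠ 1 := by rintro rfl; exact hnp (by rwa [mul_one])
    omega
  have := classNumber_eq_one_iff.mp h1
  obtain ⟨s, t, hst⟩ := exists_sq_add_mul_sq_eq_four_mul hsf α hα (Algebra.eq_top_iff.mpr hgen)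
  exact hp.sq_add_mul_sq_ne_four_mul hc hsf s t hst

/-- If the imaginary quadratic field `ℚ(√-a)` (`a ≥ 1` squarefree) has class number 1, then
`a` is either 1 or a prime; consequently if `a > 1` then `a` is prime. -/
theorem stmt_18 (a : ℕ) (ha : 1 ≤ a) (hsf : Squarefree a)
    (K : Type*) [Field K] [NumberField K] (α : K) (hα : α ^ 2 = -(a : K))
    (hgen : ∀ x : K, x ∈ Algebra.adjoin ℚ ({α} : Set K))
    (h1 : NumberField.classNumber K = 1) :
    (a = 1 ∨ a.Prime) ∧ (1 < a → a.Prime) :=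
  stmt_18_general a hsf K α hα hgen h1
end
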